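/- Let (p_n) be a strictly increasing enumeration of the odd primes and let P be the Puiseux monoid generated by {1/(2^n p_n) : n ∈ ℕ}. Then P is atomic with atoms exactly {1/(2^n p_n) : n ∈ ℕ}, but P is not hereditarily atomic: the submonoid generated by {1/2^n : n ∈ ℕ} is a submonoid of P with no atoms. -/

import Mathlib

/-- `a` is an atom of the additive submonoid `P`. -/
def IsAtomOf {K : Type*} [AddCommMonoid K] (P : AddSubmonoid K) (a : K) : Prop :=
  a ∈ P ∧ a ≠ 0 ∧ ∀ x ∈ P, ∀ y ∈ P, a = x + y → x = 0 ∨ y = 0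

/-- `P` is atomic: every element is a finite sum of atoms. -/
def IsAtomicMonoid {K : Type*} [AddCommMonoid K] (P : AddSubmonoid K) : Prop :=
  ∀ x ∈ P, ∃ s : Multiset K, (∀ a ∈ s, IsAtomOf P a) ∧ s.sum = x

/-- The set of factorizations of `x` into atoms of `P`. -/
def Factorizations {K : Type*} [AddCommMonoid K] (P : AddSubmonoid K) (x : K) :
    Set (Multiset K) :=
  {s | (∀ a ∈ s, IsAtomOf P a) ∧ s.sum = x}

/-- `P` is an FF-monoid. -/
def IsFFMonoid {K : Type*} [AddCommMonoid K] (P : AddSubmonoid K) : Prop :=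
  IsAtomicMonoid P ∧ ∀ x ∈ P, (Factorizations P x).Finite

/-- `P` is a BF-monoid. -/
def IsBFMonoid {K : Type*} [AddCommMonoid K] (P : AddSubmonoid K) : Prop :=
  IsAtomicMonoid P ∧ ∀ x ∈ P, {n : ℕ | ∃ s ∈ Factorizations P x, Multiset.card s = n}.Finite

/-! Among the generators, `1 / (2 ^ n * p n)` is the only one of `p n`-adic norm greater than `1`,
so by the ultrametric inequality it is not a sum of the other generators. In a monoid generated by
nonnegative elements such a generator is an atom, because a splitting into two nonzero summands
only involves strictly smaller generators. The dyadic submonoid sits in `P` because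
`1 / 2 ^ n = p n • (1 / (2 ^ n * p n))`, and it has no atoms since it is closed under halving. -/

open AddSubmonoid

section Atoms

variable {K : Type*} [AddCommMonoid K] {G : Set K}

theorem mem_of_isAtomOf_closure {a : K} (ha : IsAtomOf (closure G) a) : a ∈ G := by
  have haG := ha.1
  induction haG using closure_induction with
  | mem x hx => exact hx
  | zero => exact absurd rfl ha.2.1
  | add x y hx hy ihx ihy =>
    rcases ha.2.2 x hx y hy rfl with rfl | rfl
    · rw [zero_add] at ha ⊢; exact ihy ha
    · rw [add_zero] at ha ⊢; exact ihx ha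

theorem isAtomicMonoid_closure (h : ∀ g ∈ G, IsAtomOf (closure G) g) :
    IsAtomicMonoid (closure G) := by
  intro x hx
  induction hx using closure_induction with
  | mem x hx => exact ⟨{x}, by simpa using h x hx, Multiset.sum_singleton x⟩
  | zero => exact ⟨0, by simp, Multiset.sum_zero⟩
  | add x y _ _ ihx ihy =>
    obtain ⟨s, hs, rfl⟩ := ihx
    obtain ⟨t, ht, rfl⟩ := ihy
    refine ⟨s + t, fun a ha => ?_, Multiset.sum_add s t⟩
    rcases Multiset.mem_add.mp ha with ha | ha
    exacts [hs a ha, ht a ha]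

end Atoms

theorem not_isAtomOf_of_forall_div_two_mem {K : Type*} [DivisionSemiring K] [NeZero (2 : K)]
    {P : AddSubmonoid K} (hP : ∀ x ∈ P, x / 2 ∈ P) (a : K) : ¬IsAtomOf P a := by
  rintro ⟨haP, ha0, hsplit⟩
  have hhalf : a / 2 ≠ 0 := div_ne_zero ha0 two_ne_zero
  rcases hsplit _ (hP a haP) _ (hP a haP) (add_halves a).symm with h | h <;> exact hhalf h

section Ordered

variable {K : Type*} [AddCommMonoid K] [LinearOrder K] [IsOrderedCancelAddMonoid K] {G : Set K}

theorem nonneg_of_mem_closure (hG : ∀ g ∈ G, 0 ≤ g) {x : K} (hx : x ∈ closure G) : 0 ≤ x := by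
  induction hx using closure_induction with
  | mem x hx => exact hG x hx
  | zero => exact le_rfl
  | add x y _ _ hx hy => exact add_nonneg hx hy

theorem mem_closure_inter_Iic (hG : ∀ g ∈ G, 0 ≤ g) {x : K} (hx : x ∈ closure G) :
    x ∈ closure (G ∩ Set.Iic x) := by
  induction hx using closure_induction with
  | mem x hx => exact subset_closure ⟨hx, le_rfl⟩
  | zero => exact zero_mem _
  | add x y hxG hyG hx hy =>
    have hxy : x ≤ x + y := le_add_of_nonneg_right (nonneg_of_mem_closure hG hyG)
    have hyx : y ≤ x + y := le_add_of_nonneg_left (nonneg_of_mem_closure hG hxG)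
    exact add_mem (closure_mono (Set.inter_subset_inter_right G (Set.Iic_subset_Iic.mpr hxy)) hx)
      (closure_mono (Set.inter_subset_inter_right G (Set.Iic_subset_Iic.mpr hyx)) hy)

theorem isAtomOf_closure_of_notMem_closure_diff (hG : ∀ g ∈ G, 0 ≤ g) {g : K} (hgG : g ∈ G)
    (hg : g ∉ closure (G \ {g})) : IsAtomOf (closure G) g := by
  refine ⟨subset_closure hgG, fun h0 => hg (h0 ▸ zero_mem _), fun x hx y hy hxy => ?_⟩
  by_contra! hne
  have hxg : x < g := hxy ▸ lt_add_of_pos_right x ((nonneg_of_mem_closure hG hy).lt_of_ne' hne.2)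
  have hyg : y < g := hxy ▸ lt_add_of_pos_left y ((nonneg_of_mem_closure hG hx).lt_of_ne' hne.1)
  have hle : ∀ z < g, closure (G ∩ Set.Iic z) ≤ closure (G \ {g}) := fun z hz =>
    closure_mono fun a ha => ⟨ha.1, (lt_of_le_of_lt ha.2 hz).ne⟩
  have hsum : x + y ∈ closure (G \ {g}) :=
    add_mem (hle x hxg (mem_closure_inter_Iic hG hx)) (hle y hyg (mem_closure_inter_Iic hG hy))
  exact hg (hxy ▸ hsum)

end Ordered

section Padic

variable {q : ℕ} [Fact q.Prime]

theorem padicNorm_le_one_of_mem_closure {S : Set ℚ} (hS : ∀ x ∈ S, padicNorm q x ≤ 1) {x : ℚ}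
    (hx : x ∈ AddSubmonoid.closure S) : padicNorm q x ≤ 1 := by
  induction hx using closure_induction with
  | mem x hx => exact hS x hx
  | zero => simp
  | add x y _ _ hx hy => exact padicNorm.nonarchimedean.trans (max_le hx hy)

theorem padicNorm_one_div_natCast {m : ℕ} (h : ¬q ∣ m) : padicNorm q (1 / m) = 1 := by
  rw [padicNorm.div, padicNorm.one, (padicNorm.nat_eq_one_iff m).mpr h, div_one]

theorem one_lt_padicNorm_one_div_mul_self {m : ℕ} (hm : m ≠ 0) :
    1 < padicNorm q (1 / (m * q)) := by
  have hm_pos : 0 < padicNorm q m := (padicNorm.nonneg _).lt_of_ne' (padicNorm.nonzero (by simpa))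
  have hq : (1 : ℚ) < q := by exact_mod_cast (Fact.out : q.Prime).one_lt
  rw [padicNorm.div, padicNorm.one, padicNorm.mul, padicNorm.padicNorm_p_of_prime, one_div,
    mul_inv, inv_inv]
  exact one_lt_mul_of_le_of_lt ((one_le_inv₀ hm_pos).mpr (padicNorm.of_nat m)) hq

end Padic

theorem Nat.Prime.not_dvd_two_pow_mul {q r : ℕ} (hq : q.Prime) (hq_odd : Odd q) (hr : r.Prime)
    (hqr : q ≠ r) (k : ℕ) : ¬q ∣ 2 ^ k * r := by
  rw [hq.dvd_mul, not_or]
  constructor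
  · intro h
    rw [(Nat.prime_dvd_prime_iff_eq hq Nat.prime_two).mp (hq.dvd_of_dvd_pow h)] at hq_odd
    exact Nat.not_odd_iff_even.mpr even_two hq_odd
  · exact fun h => hqr ((Nat.prime_dvd_prime_iff_eq hq hr).mp h)

theorem one_div_two_pow_mul_notMem_closure_diff {p : ℕ → ℕ} (hinj : Function.Injective p)
    (hp : ∀ n, (p n).Prime ∧ Odd (p n)) (n : ℕ) :
    1 / (2 ^ n * (p n : ℚ)) ∉ AddSubmonoid.closure
      ({x : ℚ | ∃ k : ℕ, x = 1 / (2 ^ k * (p k : ℚ))} \ {1 / (2 ^ n * (p n : ℚ))}) := by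
  have : Fact (p n).Prime := ⟨(hp n).1⟩
  intro h
  refine (padicNorm_le_one_of_mem_closure (q := p n) ?_ h).not_gt ?_
  · rintro _ ⟨⟨k, rfl⟩, hk⟩
    have hkn : p n ≠ p k := hinj.ne fun hnk => hk (hnk ▸ rfl)
    have hdvd := (hp n).1.not_dvd_two_pow_mul (hp n).2 (hp k).1 hkn k
    exact_mod_cast (padicNorm_one_div_natCast hdvd).le
  · simpa using one_lt_padicNorm_one_div_mul_self (q := p n) (pow_ne_zero n two_ne_zero)

theorem div_two_mem_closure_one_div_two_pow {x : ℚ}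
    (hx : x ∈ AddSubmonoid.closure {x : ℚ | ∃ n : ℕ, x = 1 / 2 ^ n}) :
    x / 2 ∈ AddSubmonoid.closure {x : ℚ | ∃ n : ℕ, x = 1 / 2 ^ n} := by
  induction hx using closure_induction with
  | mem x hx =>
    obtain ⟨n, rfl⟩ := hx
    exact subset_closure ⟨n + 1, by rw [pow_succ]; ring⟩
  | zero => simp
  | add x y _ _ hx hy => exact add_div x y 2 ▸ add_mem hx hy

theorem atomic_not_hereditarily_atomic_general (p : ℕ → ℕ) (hmono : StrictMono p)
    (hp : ∀ n, (p n).Prime ∧ Odd (p n))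
    (P : AddSubmonoid ℚ)
    (hgen : AddSubmonoid.closure {x : ℚ | ∃ n : ℕ, x = 1 / (2 ^ n * (p n : ℚ))} = P) :
    IsAtomicMonoid P ∧
      {a | IsAtomOf P a} = {x : ℚ | ∃ n : ℕ, x = 1 / (2 ^ n * (p n : ℚ))} ∧
      AddSubmonoid.closure {x : ℚ | ∃ n : ℕ, x = 1 / (2 ^ n : ℚ)} ≤ P ∧
      ∀ a : ℚ, ¬IsAtomOf (AddSubmonoid.closure {x : ℚ | ∃ n : ℕ, x = 1 / (2 ^ n : ℚ)}) a := by
  subst hgen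
  set G : Set ℚ := {x : ℚ | ∃ n : ℕ, x = 1 / (2 ^ n * (p n : ℚ))}
  have hatom : ∀ g ∈ G, IsAtomOf (closure G) g := by
    rintro _ ⟨n, rfl⟩
    refine isAtomOf_closure_of_notMem_closure_diff ?_ ⟨n, rfl⟩
      (one_div_two_pow_mul_notMem_closure_diff hmono.injective hp n)
    rintro _ ⟨k, rfl⟩
    positivity
  refine ⟨isAtomicMonoid_closure hatom, Set.ext fun a => ⟨mem_of_isAtomOf_closure, hatom a⟩, ?_,
    not_isAtomOf_of_forall_div_two_mem fun x => div_two_mem_closure_one_div_two_pow⟩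
  rw [closure_le]
  rintro _ ⟨n, rfl⟩
  have hpn : (p n : ℚ) ≠ 0 := by exact_mod_cast (hp n).1.ne_zero
  have hsplit : (1 : ℚ) / 2 ^ n = p n • (1 / (2 ^ n * (p n : ℚ))) := by
    rw [nsmul_eq_mul]; field_simp
  rw [hsplit]
  exact nsmul_mem (hatom _ ⟨n, rfl⟩).1 _

theorem atomic_not_hereditarily_atomic (p : ℕ → ℕ) (hmono : StrictMono p)
    (hp : ∀ n, (p n).Prime ∧ Odd (p n))
    (hall : ∀ q : ℕ, q.Prime → Odd q → ∃ n, p n = q)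
    (P : AddSubmonoid ℚ)
    (hgen : AddSubmonoid.closure {x : ℚ | ∃ n : ℕ, x = 1 / (2 ^ n * (p n : ℚ))} = P) :
    IsAtomicMonoid P ∧
      {a | IsAtomOf P a} = {x : ℚ | ∃ n : ℕ, x = 1 / (2 ^ n * (p n : ℚ))} ∧
      AddSubmonoid.closure {x : ℚ | ∃ n : ℕ, x = 1 / (2 ^ n : ℚ)} ≤ P ∧
      ∀ a : ℚ, ¬IsAtomOf (AddSubmonoid.closure {x : ℚ | ∃ n : ℕ, x = 1 / (2 ^ n : ℚ)}) a :=
  atomic_not_hereditarily_atomic_general p hmono hp P hgen
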